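/- arXiv:math/0003044 — 4 statements merged into one kernel-verified Lean document; each statement's English description precedes it below -/
import Mathlib

section
/- For every complex number z with 0 < Arg(z) < π (i.e. z in the sector S₁) or -π < Arg(z) < -π/3 (z in S₋₁), one has Re((e^{-2πi/3}z)^{3/2}) = -Re((e^{2πi/3}z)^{3/2}), where all powers use the principal branch; while for |Arg(z)| < π/3 (z in S₀), one has Re((e^{-2πi/3}z)^{3/2}) = Re((e^{2πi/3}z)^{3/2}). -/
/-!
Writing `z = |z| e^{iθ}` with `θ = Arg z`, the rotation `e^{2πin/3} z` equals `|z| e^{i(θ + 2πn/3)}`,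
and when `θ + 2πn/3 ∈ (-π, π]` this is its principal polar form, so
`Re((e^{2πin/3} z)^{3/2}) = |z|^{3/2} cos(3θ/2 + nπ) = (-1)^n |z|^{3/2} cos(3θ/2)`.
As `e^{-2πi/3} = e^{4πi/3}` and `e^{2πi/3} = e^{-4πi/3}`, in each sector both rotations can be
written with an `n ∈ {±1, ±2}` keeping the angle principal; the two values of `n` have opposite
parities on `S₁` (`-1, -2`) and `S₋₁` (`2, 1`), and equal parities on `S₀` (`-1, 1`).
-/

open Complex Real

theorem re_cpow_ofReal_mul_exp_mul_I {r θ : ℝ} (hr : 0 < r) (hθ : θ ∈ Set.Ioc (-π) π) (s : ℝ) :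
    (((r : ℂ) * exp (θ * I)) ^ (s : ℂ)).re = r ^ s * Real.cos (s * θ) := by
  have hw : (r : ℂ) * exp (θ * I) ≠ 0 := mul_ne_zero (by exact_mod_cast hr.ne') (exp_ne_zero _)
  have hnorm : ‖(r : ℂ) * exp (θ * I)‖ = r := by
    rw [norm_mul, norm_exp_ofReal_mul_I, mul_one, norm_real, Real.norm_of_nonneg hr.le]
  have harg : arg ((r : ℂ) * exp (θ * I)) = θ := by
    rw [exp_mul_I]
    exact arg_mul_cos_add_sin_mul_I hr hθ
  rw [cpow_def_of_ne_zero hw, exp_re]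
  simp only [mul_re, mul_im, log_re, log_im, hnorm, harg, ofReal_re, ofReal_im, mul_zero,
    sub_zero, Real.rpow_def_of_pos hr]
  ring_nf

theorem exp_mul_I_mul_eq_polar (z : ℂ) (φ : ℝ) :
    exp (φ * I) * z = ‖z‖ * exp ((arg z + φ : ℝ) * I) := by
  conv_lhs => rw [← norm_mul_exp_arg_mul_I z]
  push_cast
  rw [add_mul, Complex.exp_add]; ring

theorem re_exp_mul_cpow_three_halves {z : ℂ} (hz : z ≠ 0) (n : ℤ)
    (hn : arg z + n * (2 * π / 3) ∈ Set.Ioc (-π) π) :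
    ((exp (n * (2 * π * I / 3)) * z) ^ ((3 : ℂ) / 2)).re =
      (-1) ^ n * (‖z‖ ^ (3 / 2 : ℝ) * Real.cos (3 / 2 * arg z)) := by
  have hrot : exp (n * (2 * π * I / 3)) = exp ((n * (2 * π / 3) : ℝ) * I) := by
    push_cast; ring_nf
  have h32 : (3 : ℂ) / 2 = ((3 / 2 : ℝ) : ℂ) := by norm_num
  rw [hrot, exp_mul_I_mul_eq_polar, h32, re_cpow_ofReal_mul_exp_mul_I (norm_pos_iff.mpr hz) hn,
    show 3 / 2 * (arg z + n * (2 * π / 3)) = 3 / 2 * arg z + n * π by ring, cos_add_int_mul_pi]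
  ring

theorem exp_int_mul_two_pi_I_div_three_eq {m n : ℤ} (h : m ≡ n [ZMOD 3]) :
    exp (m * (2 * π * I / 3)) = exp (n * (2 * π * I / 3)) := by
  obtain ⟨k, hk⟩ := Int.modEq_iff_dvd.mp h.symm
  rw [exp_eq_exp_iff_exists_int]
  refine ⟨k, ?_⟩
  have : (m : ℂ) = n + 3 * k := by exact_mod_cast (by omega : m = n + 3 * k)
  rw [this]; ring

/-- Identity (id1): for `z` in the sector `S₁` (i.e. `π/3 < Arg z < π`) or `S₋₁`
(i.e. `-π < Arg z < -π/3`), `Re((e^{-2πi/3}z)^{3/2}) = -Re((e^{2πi/3}z)^{3/2})`;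
for `z ∈ S₀` (i.e. `|Arg z| < π/3`), `Re((e^{-2πi/3}z)^{3/2}) = Re((e^{2πi/3}z)^{3/2})`. -/
theorem stmt0 (z : ℂ) :
    (((Real.pi / 3 < z.arg ∧ z.arg < Real.pi) ∨
        (-Real.pi < z.arg ∧ z.arg < -(Real.pi / 3))) →
      ((Complex.exp (-(2 * Real.pi * Complex.I) / 3) * z) ^ ((3 : ℂ) / 2)).re =
        -((Complex.exp ((2 * Real.pi * Complex.I) / 3) * z) ^ ((3 : ℂ) / 2)).re) ∧
    (|z.arg| < Real.pi / 3 →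
      ((Complex.exp (-(2 * Real.pi * Complex.I) / 3) * z) ^ ((3 : ℂ) / 2)).re =
        ((Complex.exp ((2 * Real.pi * Complex.I) / 3) * z) ^ ((3 : ℂ) / 2)).re) := by
  rcases eq_or_ne z 0 with rfl | hz
  · simp [zero_cpow (by norm_num : (3 : ℂ) / 2 ≠ 0)]
  have hminus : exp (-(2 * π * I) / 3) = exp ((-1 : ℤ) * (2 * π * I / 3)) := by
    push_cast; ring_nf
  have hplus : exp (2 * π * I / 3) = exp ((1 : ℤ) * (2 * π * I / 3)) := by
    push_cast; ring_nf
  have hπ := pi_pos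
  refine ⟨?_, fun h ↦ ?_⟩
  · rintro (⟨h1, h2⟩ | ⟨h1, h2⟩)
    · rw [hminus, hplus, exp_int_mul_two_pi_I_div_three_eq (by decide : (1 : ℤ) ≡ -2 [ZMOD 3]),
        re_exp_mul_cpow_three_halves hz (-1) (by constructor <;> push_cast <;> linarith),
        re_exp_mul_cpow_three_halves hz (-2) (by constructor <;> push_cast <;> linarith)]
      norm_num
    · rw [hminus, hplus, exp_int_mul_two_pi_I_div_three_eq (by decide : (-1 : ℤ) ≡ 2 [ZMOD 3]),
        re_exp_mul_cpow_three_halves hz 2 (by constructor <;> push_cast <;> linarith),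
        re_exp_mul_cpow_three_halves hz 1 (by constructor <;> push_cast <;> linarith)]
      norm_num
  · obtain ⟨h1, h2⟩ := abs_lt.mp h
    rw [hminus, hplus,
      re_exp_mul_cpow_three_halves hz (-1) (by constructor <;> push_cast <;> linarith),
      re_exp_mul_cpow_three_halves hz 1 (by constructor <;> push_cast <;> linarith)]
    norm_num
end

section
/- For every complex number z with π/3 < Arg(z) ≤ π or |Arg(z)| < π/3 (i.e. z in S₁ ∪ S₀), one has Re((e^{-2πi/3}z)^{3/2}) = -Re(z^{3/2}); while for -π < Arg(z) < -π/3 (z in S₋₁), one has Re((e^{-2πi/3}z)^{3/2}) = Re(z^{3/2}), using the principal branch of the power function throughout. -/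
open Complex Real

/-!
Rotating `z` by `φ` adds `φ` to the imaginary part of `log z`, as long as `arg z + φ` stays
in `(-π, π]`; the power `(e^{iφ} z)^s` then picks up the factor `e^{iφ s}`. Multiplying by
`e^{-2πi/3}` is such a rotation by `-2π/3` when `arg z > -π/3`, giving the factor
`e^{-πi} = -1`, and by `4π/3` when `arg z ≤ -π/3`, giving `e^{2πi} = 1`.
-/

namespace Complex

lemma log_exp_mul_I_mul {z : ℂ} (hz : z ≠ 0) {φ : ℝ} (h : arg z + φ ∈ Set.Ioc (-π) π) :
    log (exp (φ * I) * z) = log z + φ * I := by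
  have hexp : exp (φ * I) * z = exp (log z + φ * I) := by
    rw [exp_add, exp_log hz, mul_comm]
  rw [hexp, log_exp] <;> simp [log_im, h.1, h.2]

lemma exp_mul_I_mul_cpow {z : ℂ} (hz : z ≠ 0) {φ : ℝ} (h : arg z + φ ∈ Set.Ioc (-π) π)
    (s : ℂ) : (exp (φ * I) * z) ^ s = z ^ s * exp (φ * I * s) := by
  rw [cpow_def_of_ne_zero (mul_ne_zero (exp_ne_zero _) hz), log_exp_mul_I_mul hz h,
    cpow_def_of_ne_zero hz, add_mul, exp_add]

lemma exp_neg_two_pi_div_three_mul_cpow_of_neg_pi_div_three_lt_arg {z : ℂ} (hz : z ≠ 0)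
    (h : -(π / 3) < arg z) :
    (exp (-(2 * π * I) / 3) * z) ^ ((3 : ℂ) / 2) = -z ^ ((3 : ℂ) / 2) := by
  have hrot : exp (-(2 * π * I) / 3) = exp (↑(-(2 * π / 3)) * I) := by
    push_cast; ring_nf
  have hfactor : exp (↑(-(2 * π / 3)) * I * (3 / 2)) = -1 := by
    rw [show (↑(-(2 * π / 3)) * I * (3 / 2) : ℂ) = -(π * I) by push_cast; ring, exp_neg,
      exp_pi_mul_I, inv_neg, inv_one]
  rw [hrot, exp_mul_I_mul_cpow hz ⟨by linarith, by linarith [arg_le_pi z, pi_pos]⟩, hfactor,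
    mul_neg_one]

lemma exp_neg_two_pi_div_three_mul_cpow_of_arg_le_neg_pi_div_three {z : ℂ} (hz : z ≠ 0)
    (h : arg z ≤ -(π / 3)) :
    (exp (-(2 * π * I) / 3) * z) ^ ((3 : ℂ) / 2) = z ^ ((3 : ℂ) / 2) := by
  have hrot : exp (-(2 * π * I) / 3) = exp (↑(4 * π / 3) * I) := by
    rw [exp_eq_exp_iff_exists_int]; exact ⟨-1, by push_cast; ring⟩
  have hfactor : exp (↑(4 * π / 3) * I * (3 / 2)) = 1 := by
    rw [← exp_two_pi_mul_I]; push_cast; ring_nf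
  rw [hrot, exp_mul_I_mul_cpow hz ⟨by linarith [neg_pi_lt_arg z], by linarith⟩, hfactor,
    mul_one]

end Complex

/-- Identity (id2): for `z ∈ S₁ ∪ S₀` (i.e. `π/3 < Arg z ≤ π` or `|Arg z| < π/3`),
`Re((e^{-2πi/3}z)^{3/2}) = -Re(z^{3/2})`; for `z ∈ S₋₁` (i.e. `-π < Arg z < -π/3`),
`Re((e^{-2πi/3}z)^{3/2}) = Re(z^{3/2})`. -/
theorem stmt1 (z : ℂ) :
    (((Real.pi / 3 < z.arg ∧ z.arg ≤ Real.pi) ∨ |z.arg| < Real.pi / 3) →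
      ((Complex.exp (-(2 * Real.pi * Complex.I) / 3) * z) ^ ((3 : ℂ) / 2)).re =
        -((z ^ ((3 : ℂ) / 2)).re)) ∧
    ((-Real.pi < z.arg ∧ z.arg < -(Real.pi / 3)) →
      ((Complex.exp (-(2 * Real.pi * Complex.I) / 3) * z) ^ ((3 : ℂ) / 2)).re =
        (z ^ ((3 : ℂ) / 2)).re) := by
  rcases eq_or_ne z 0 with rfl | hz
  · simp [zero_cpow (by norm_num : (3 : ℂ) / 2 ≠ 0)]
  refine ⟨fun h => ?_, fun h => ?_⟩
  · have harg : -(π / 3) < arg z := by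
      rcases h with ⟨h, -⟩ | h
      · linarith [pi_pos]
      · exact (abs_lt.mp h).1
    rw [exp_neg_two_pi_div_three_mul_cpow_of_neg_pi_div_three_lt_arg hz harg, neg_re]
  · rw [exp_neg_two_pi_div_three_mul_cpow_of_arg_le_neg_pi_div_three hz h.2.le]
end

section
/- Fix θ ∈ ℝ and consider the curve of λ = ρe^{iφ} (ρ > 0, |φ| < π) satisfying sin(φ/2) - (1/(24ρ²))·sin(2θ - 3φ/2) = O(ρ^{-6}) as ρ → ∞. Then along this curve Im(λ) = ρ sin φ = O(ρ^{-1}) as ρ → ∞. In particular, any curve of solutions of the equation Re((e^{-2θi/3}(e^{iθ}-λ))^{3/2}) = Re((e^{-2θi/3}(-e^{iθ}-λ))^{3/2}) going to infinity is asymptotic to the positive real axis. -/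
open Real

lemma abs_sin_le_two_mul_abs_sin_half (x : ℝ) : |sin x| ≤ 2 * |sin (x / 2)| := by
  have hx : sin x = 2 * sin (x / 2) * cos (x / 2) := by
    rw [← sin_two_mul, mul_div_cancel₀ x two_ne_zero]
  rw [hx, abs_mul, abs_mul, abs_two]
  exact mul_le_of_le_one_right (by positivity) (abs_cos_le_one _)

lemma abs_sin_half_le_of_abs_sub_le {θ φ ρ ε : ℝ}
    (h : |sin (φ / 2) - sin (2 * θ - 3 * φ / 2) / (24 * ρ ^ 2)| ≤ ε) :
    |sin (φ / 2)| ≤ ε + 1 / (24 * ρ ^ 2) := by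
  have hb : |sin (2 * θ - 3 * φ / 2) / (24 * ρ ^ 2)| ≤ 1 / (24 * ρ ^ 2) := by
    rw [abs_div, abs_of_nonneg (by positivity : (0 : ℝ) ≤ 24 * ρ ^ 2)]
    gcongr
    exact abs_sin_le_one _
  linarith [abs_sub_abs_le_abs_sub (sin (φ / 2)) (sin (2 * θ - 3 * φ / 2) / (24 * ρ ^ 2))]

theorem stmt9_general (θ C : ℝ) (hC : 0 ≤ C) :
    ∃ C' R' : ℝ, 0 < R' ∧ ∀ ρ φ : ℝ, R' ≤ ρ → |φ| < Real.pi →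
      |Real.sin (φ / 2) - Real.sin (2 * θ - 3 * φ / 2) / (24 * ρ ^ 2)| ≤ C / ρ ^ 6 →
      |ρ * Real.sin φ| ≤ C' / ρ := by
  refine ⟨2 * C + 1 / 12, 1, one_pos, fun ρ φ hρ _ h => ?_⟩
  have hρ0 : 0 < ρ := one_pos.trans_le hρ
  calc |ρ * sin φ| = ρ * |sin φ| := by rw [abs_mul, abs_of_pos hρ0]
    _ ≤ ρ * (2 * (C / ρ ^ 6 + 1 / (24 * ρ ^ 2))) := by
        gcongr
        exact (abs_sin_le_two_mul_abs_sin_half φ).trans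
          (by linarith [abs_sin_half_le_of_abs_sub_le h])
    _ = 2 * (C / ρ ^ 5) + 1 / 12 / ρ := by
        field_simp
        ring
    _ ≤ 2 * (C / ρ) + 1 / 12 / ρ := by
        gcongr
        exact le_self_pow₀ hρ (by norm_num)
    _ = (2 * C + 1 / 12) / ρ := by ring

/-- Along the curve `λ = ρe^{iφ}` of solutions of
`sin(φ/2) - (1/(24ρ²))·sin(2θ - 3φ/2) = O(ρ^{-6})`, one has
`Im(λ) = ρ sin φ = O(ρ^{-1})` as `ρ → ∞`: the curve is asymptotic to the positive
real axis. -/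
theorem stmt9 (θ C R : ℝ) (hC : 0 ≤ C) (hR : 0 < R) :
    ∃ C' R' : ℝ, 0 < R' ∧ ∀ ρ φ : ℝ, R' ≤ ρ → |φ| < Real.pi →
      |Real.sin (φ / 2) - Real.sin (2 * θ - 3 * φ / 2) / (24 * ρ ^ 2)| ≤ C / ρ ^ 6 →
      |ρ * Real.sin φ| ≤ C' / ρ :=
  stmt9_general θ C hC
end

section
/- Let θ ∈ (-π, π], α = -e^{iθ}, β = e^{iθ} (so Arg(β - α) = θ), and let Γ be the intersection of the rays α + r e^{2θi/3} and β + r e^{2θi/3 ∓ 2πi/3} (sign according to θ ≥ 0 or θ < 0), r ∈ [0, ∞). If θ = π/2 then Γ = 1/√3 is real, and the three arms of the set Y(α, β) = Y(-i, i) are the straight segments [i, 1/√3], [-i, 1/√3] and the ray [1/√3, ∞): indeed for θ = π/2 the curve {λ : Re((e^{-iπ/3}(i - λ))^{3/2}) = Re((e^{-iπ/3}(-i - λ))^{3/2})} contains the real interval [1/√3, ∞). -/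
/-!
Write `w₊ = e^{-iπ/3}(i - λ)` and `w₋ = e^{-iπ/3}(-i - λ)`. Then `w₋ = e^{-2πi/3} · conj w₊`, so
`|w₋| = |w₊|`, and `λ ≥ 1/√3` says exactly that `φ = arg w₊ ≥ π/3`, which keeps
`arg w₋ = 4π/3 - φ` in the principal range. Since `Re w^{3/2} = |w|^{3/2} cos (3/2 · arg w)` and
`3/2 · (4π/3 - φ) = 2π - 3φ/2`, the two real parts agree.
-/

open Complex Real ComplexConjugate

namespace Complex

lemma exp_neg_pi_div_three_mul_I : exp ((-(π / 3) : ℝ) * I) = 1 / 2 - (√3 / 2 : ℝ) * I := by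
  rw [exp_mul_I, ← ofReal_cos, ← ofReal_sin, Real.cos_neg, Real.sin_neg,
    Real.cos_pi_div_three, Real.sin_pi_div_three]
  push_cast
  ring

lemma pi_div_three_le_arg {z : ℂ} (him : 0 < z.im) (h : √3 * z.re ≤ z.im) : π / 3 ≤ arg z := by
  have hz : z ≠ 0 := fun h0 => by simp [h0] at him
  have hnorm : 2 * z.re ≤ ‖z‖ := by
    have h3 : √3 ^ 2 = 3 := Real.sq_sqrt (by norm_num)
    have hsq : ‖z‖ ^ 2 = z.re ^ 2 + z.im ^ 2 := by rw [Complex.sq_norm, normSq_apply]; ring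
    by_contra! hlt
    have hre : 0 < z.re := by linarith [norm_nonneg z]
    nlinarith [norm_nonneg z, mul_nonneg (sub_nonneg.2 h) (by positivity : 0 ≤ z.im + √3 * z.re)]
  have hcos : z.re / ‖z‖ ≤ Real.cos (π / 3) := by
    rw [Real.cos_pi_div_three, div_le_iff₀ (norm_pos_iff.2 hz)]
    linarith
  rw [arg_of_im_pos him, ← Real.arccos_cos (by positivity : 0 ≤ π / 3) (by linarith [pi_pos])]
  exact Real.arccos_le_arccos hcos

lemma arg_exp_neg_two_pi_div_three_mul_I_mul_conj {z : ℂ} (hz : π / 3 ≤ arg z) :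
    arg (exp ((-(2 * π / 3) : ℝ) * I) * conj z) = 4 * π / 3 - arg z := by
  have hz0 : z ≠ 0 := fun h0 => by simp [h0] at hz; linarith [pi_pos]
  have hangle : ((4 * π / 3 - arg z : ℝ) : ℂ) * I
      = ((-(2 * π / 3) : ℝ) : ℂ) * I + conj (arg z * I) + 2 * π * I := by
    simp only [map_mul, conj_ofReal, conj_I]
    push_cast
    ring
  have hpolar : exp ((-(2 * π / 3) : ℝ) * I) * conj z
      = ‖z‖ * exp ((4 * π / 3 - arg z : ℝ) * I) := by
    conv_lhs => rw [← norm_mul_exp_arg_mul_I z]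
    rw [hangle, exp_add, exp_add, exp_two_pi_mul_I, exp_conj, map_mul, conj_ofReal]
    ring
  rw [hpolar, exp_mul_I, arg_mul_cos_add_sin_mul_I (norm_pos_iff.2 hz0)]
  constructor <;> linarith [arg_le_pi z, pi_pos]

lemma re_cpow_three_halves_exp_neg_two_pi_div_three_mul_I_mul_conj {z : ℂ} (hz : π / 3 ≤ arg z) :
    ((exp ((-(2 * π / 3) : ℝ) * I) * conj z) ^ (3 / 2 : ℂ)).re = (z ^ (3 / 2 : ℂ)).re := by
  have h32 : (3 / 2 : ℂ) = ((3 / 2 : ℝ) : ℂ) := by push_cast; ring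
  rw [h32, cpow_ofReal_re, cpow_ofReal_re, arg_exp_neg_two_pi_div_three_mul_I_mul_conj hz,
    norm_mul, norm_conj, norm_exp_ofReal_mul_I, one_mul,
    show (4 * π / 3 - arg z) * (3 / 2) = 2 * π - arg z * (3 / 2) by ring, Real.cos_two_pi_sub]

lemma re_cpow_three_halves_exp_neg_pi_div_three_mul_I_sub_eq {lam : ℝ} (hlam : 1 ≤ √3 * lam) :
    ((exp ((-(π / 3) : ℝ) * I) * (I - lam)) ^ (3 / 2 : ℂ)).re
      = ((exp ((-(π / 3) : ℝ) * I) * (-I - lam)) ^ (3 / 2 : ℂ)).re := by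
  set u := exp ((-(π / 3) : ℝ) * I) * (I - lam)
  have hu : u = ((√3 - lam) / 2 : ℝ) + ((1 + √3 * lam) / 2 : ℝ) * I := by
    simp only [u, exp_neg_pi_div_three_mul_I]
    push_cast
    ring_nf
    rw [I_sq]
    ring
  have h3 : √3 ^ 2 = 3 := Real.sq_sqrt (by norm_num)
  have harg : π / 3 ≤ arg u := by
    apply pi_div_three_le_arg <;>
      simp only [hu, add_re, add_im, ofReal_re, ofReal_im, mul_re, mul_im, I_re, I_im] <;>
      nlinarith [Real.sqrt_nonneg 3]
  have hconj : exp ((-(π / 3) : ℝ) * I) * (-I - lam)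
      = exp ((-(2 * π / 3) : ℝ) * I) * conj u := by
    rw [map_mul, ← exp_conj, ← mul_assoc, ← exp_add, map_sub, conj_I, conj_ofReal]
    congr 2
    simp only [map_mul, conj_ofReal, conj_I]
    push_cast
    ring
  rw [hconj, re_cpow_three_halves_exp_neg_two_pi_div_three_mul_I_mul_conj harg]

end Complex

/-- The case `θ = π/2`: the intersection point `Γ` of the Stokes-line rays equals
`1/√3` (a real number), and the asymptotic curve
`{λ : Re((e^{-iπ/3}(i-λ))^{3/2}) = Re((e^{-iπ/3}(-i-λ))^{3/2})}` contains the real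
interval `[1/√3, ∞)`. -/
theorem stmt19 :
    Complex.exp (Complex.I * ((Real.pi / 2 : ℝ) : ℂ)) +
        ((4 / Real.sqrt 3 : ℝ) : ℂ) * ((Real.sin ((Real.pi / 2) / 3) : ℝ) : ℂ) *
          Complex.exp ((2 * (((Real.pi / 2 : ℝ) : ℂ) - (Real.pi : ℂ)) * Complex.I) / 3) =
      ((1 / Real.sqrt 3 : ℝ) : ℂ) ∧
    ∀ lam : ℝ, 1 / Real.sqrt 3 ≤ lam →
      ((Complex.exp (-(Complex.I * ((Real.pi / 3 : ℝ) : ℂ))) *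
          (Complex.I - (lam : ℂ))) ^ ((3 : ℂ) / 2)).re =
      ((Complex.exp (-(Complex.I * ((Real.pi / 3 : ℝ) : ℂ))) *
          (-Complex.I - (lam : ℂ))) ^ ((3 : ℂ) / 2)).re := by
  have h3pos : 0 < √3 := by positivity
  constructor
  · have hI : exp (I * ((π / 2 : ℝ) : ℂ)) = I := by
      rw [mul_comm, ofReal_div, ofReal_ofNat, exp_pi_div_two_mul_I]
    have hexp : exp ((2 * (((π / 2 : ℝ) : ℂ) - (π : ℂ)) * I) / 3)
        = exp ((-(π / 3) : ℝ) * I) := by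
      congr 1; push_cast; ring
    rw [hI, hexp, exp_neg_pi_div_three_mul_I, show π / 2 / 3 = π / 6 by ring, Real.sin_pi_div_six]
    have h3c0 : ((√3 : ℝ) : ℂ) ≠ 0 := by exact_mod_cast h3pos.ne'
    push_cast
    field_simp
    ring
  · intro lam hlam
    have hrot : exp (-(I * ((π / 3 : ℝ) : ℂ))) = exp ((-(π / 3) : ℝ) * I) := by
      congr 1; push_cast; ring
    rw [hrot]
    exact re_cpow_three_halves_exp_neg_pi_div_three_mul_I_sub_eq
      (by rwa [div_le_iff₀' h3pos] at hlam)
end
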